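/- Let X and Y be Banach spaces over ℝ. If every infinite-dimensional closed subspace of X has the Dunford–Pettis property and Y is reflexive (every bounded sequence in Y has a weakly convergent subsequence), then every bounded linear operator T : X → Y is strictly singular. -/

import Mathlib

open Filter Topology

section Defs

variable {E : Type*} [NormedAddCommGroup E] [NormedSpace ℝ E]
variable {F : Type*} [NormedAddCommGroup F] [NormedSpace ℝ F]

/-- A sequence converges weakly to `x₀`. -/
def WeakConvTo (x : ℕ → E) (x₀ : E) : Prop :=
  ∀ f : E →L[ℝ] ℝ, Tendsto (fun n => f (x n)) atTop (𝓝 (f x₀))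

/-- A sequence is weakly Cauchy. -/
def WeaklyCauchySeq (x : ℕ → E) : Prop :=
  ∀ f : E →L[ℝ] ℝ, ∃ L : ℝ, Tendsto (fun n => f (x n)) atTop (𝓝 L)

/-- Every bounded sequence has a weakly Cauchy subsequence. -/
def AlmostReflexive (E : Type*) [NormedAddCommGroup E] [NormedSpace ℝ E] : Prop :=
  ∀ x : ℕ → E, (∃ C : ℝ, ∀ n, ‖x n‖ ≤ C) →
    ∃ φ : ℕ → ℕ, StrictMono φ ∧ WeaklyCauchySeq (x ∘ φ)

/-- Every weakly convergent sequence converges in norm. -/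
def SchurProperty (E : Type*) [NormedAddCommGroup E] [NormedSpace ℝ E] : Prop :=
  ∀ (x : ℕ → E) (x₀ : E), WeakConvTo x x₀ → Tendsto x atTop (𝓝 x₀)

/-- Sequential reflexivity: every bounded sequence has a weakly convergent subsequence. -/
def SeqReflexive (E : Type*) [NormedAddCommGroup E] [NormedSpace ℝ E] : Prop :=
  ∀ x : ℕ → E, (∃ C : ℝ, ∀ n, ‖x n‖ ≤ C) →
    ∃ φ : ℕ → ℕ, StrictMono φ ∧ ∃ x₀ : E, WeakConvTo (x ∘ φ) x₀

/-- Every weakly Cauchy sequence converges weakly. -/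
def WeaklySeqComplete (E : Type*) [NormedAddCommGroup E] [NormedSpace ℝ E] : Prop :=
  ∀ x : ℕ → E, WeaklyCauchySeq x → ∃ x₀ : E, WeakConvTo x x₀

/-- No infinite-dimensional closed subspace is (sequentially) reflexive. -/
def VeryIrreflexive (E : Type*) [NormedAddCommGroup E] [NormedSpace ℝ E] : Prop :=
  ∀ X₀ : Subspace ℝ E, IsClosed (X₀ : Set E) → ¬FiniteDimensional ℝ X₀ →
    ¬SeqReflexive X₀

/-- A strictly singular bounded operator: on no infinite-dimensional closed subspace is it
an isomorphism onto its image. -/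
def StrictlySingular (T : E →L[ℝ] F) : Prop :=
  ∀ X₀ : Subspace ℝ E, IsClosed (X₀ : Set E) → ¬FiniteDimensional ℝ X₀ →
    ¬∃ c : ℝ, 0 < c ∧ ∀ x ∈ X₀, c * ‖x‖ ≤ ‖T x‖

/-- A weakly compact operator. -/
def WeaklyCompactOp (T : E →L[ℝ] F) : Prop :=
  ∀ x : ℕ → E, (∃ C : ℝ, ∀ n, ‖x n‖ ≤ C) →
    ∃ φ : ℕ → ℕ, StrictMono φ ∧ ∃ y : F, WeakConvTo (fun n => T (x (φ n))) y

/-- A completely continuous operator maps weakly convergent sequences to norm convergent ones. -/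
def CompletelyContinuousOp (T : E →L[ℝ] F) : Prop :=
  ∀ (x : ℕ → E) (x₀ : E), WeakConvTo x x₀ → ∃ y : F, Tendsto (fun n => T (x n)) atTop (𝓝 y)

/-- The image of the closed unit ball is relatively compact in norm. -/
def CompactOp (T : E →L[ℝ] F) : Prop :=
  IsCompact (closure (⇑T '' Metric.closedBall (0 : E) 1))

/-- The Dunford–Pettis property. -/
def DunfordPettisProp (E : Type*) [NormedAddCommGroup E] [NormedSpace ℝ E] : Prop :=
  ∀ (Z : Type*) [NormedAddCommGroup Z] [NormedSpace ℝ Z] [CompleteSpace Z],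
    ∀ T : E →L[ℝ] Z, WeaklyCompactOp T → CompletelyContinuousOp T

/-- The reciprocal Dunford–Pettis property. -/
def ReciprocalDunfordPettisProp (E : Type*) [NormedAddCommGroup E] [NormedSpace ℝ E] : Prop :=
  ∀ (Z : Type*) [NormedAddCommGroup Z] [NormedSpace ℝ Z] [CompleteSpace Z],
    ∀ T : E →L[ℝ] Z, CompletelyContinuousOp T → WeaklyCompactOp T

/-- The Dieudonné property. -/
def DieudonneProp (E : Type*) [NormedAddCommGroup E] [NormedSpace ℝ E] : Prop :=
  ∀ (Z : Type*) [NormedAddCommGroup Z] [NormedSpace ℝ Z] [CompleteSpace Z],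
    ∀ T : E →L[ℝ] Z,
      (∀ x : ℕ → E, WeaklyCauchySeq x → ∃ y : Z, WeakConvTo (fun n => T (x n)) y) →
      WeaklyCompactOp T

/-- A Grothendieck space: weak*-convergent sequences in the dual converge weakly. -/
def GrothendieckSpace (E : Type*) [NormedAddCommGroup E] [NormedSpace ℝ E] : Prop :=
  ∀ (f : ℕ → (E →L[ℝ] ℝ)) (g : E →L[ℝ] ℝ),
    (∀ x : E, Tendsto (fun n => f n x) atTop (𝓝 (g x))) →
    ∀ F : (E →L[ℝ] ℝ) →L[ℝ] ℝ, Tendsto (fun n => F (f n)) atTop (𝓝 (F g))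

/-- The Banach space ℓ¹ of absolutely summable real sequences. -/
abbrev EllOne : Type := lp (fun _ : ℕ => ℝ) 1

/-- Quasi-reflexive: the canonical image of `E` in its bidual has finite codimension. -/
def QuasiReflexive (E : Type*) [NormedAddCommGroup E] [NormedSpace ℝ E] : Prop :=
  FiniteDimensional ℝ
    ((StrongDual ℝ (StrongDual ℝ E)) ⧸
      LinearMap.range (NormedSpace.inclusionInDoubleDual ℝ E).toLinearMap)

/-- Hereditarily-ℓ¹: every infinite-dimensional closed subspace contains a closed subspace
topologically isomorphic to ℓ¹. -/
def HereditarilyEllOne (E : Type*) [NormedAddCommGroup E] [NormedSpace ℝ E] : Prop :=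
  ∀ X₀ : Subspace ℝ E, IsClosed (X₀ : Set E) → ¬FiniteDimensional ℝ X₀ →
    ∃ Z : Subspace ℝ E, Z ≤ X₀ ∧ IsClosed (Z : Set E) ∧ Nonempty (Z ≃L[ℝ] EllOne)

end Defs

/-!
If `T` were bounded below on an infinite-dimensional closed subspace `X₀`, then `X₀` would be
isomorphic to a closed subspace of the reflexive space `Y`, hence reflexive itself. The identity
of `X₀` would then be weakly compact, so by the Dunford–Pettis property weakly convergent
sequences in `X₀` would converge in norm. But by Riesz's lemma `X₀` contains a bounded
`1`-separated sequence, and a weakly convergent subsequence of it cannot converge in norm.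
-/

open scoped ENNReal NNReal

universe u v w

section

variable {E : Type*} [NormedAddCommGroup E] [NormedSpace ℝ E]
variable {F : Type*} [NormedAddCommGroup F] [NormedSpace ℝ F]

theorem WeakConvTo.map {x : ℕ → E} {x₀ : E} (h : WeakConvTo x x₀) (T : E →L[ℝ] F) :
    WeakConvTo (fun n => T (x n)) (T x₀) :=
  fun f => h (f.comp T)

theorem WeakConvTo.mem_of_convex_of_isClosed {s : Set E} (hs : Convex ℝ s) (hs' : IsClosed s)
    {x : ℕ → E} {x₀ : E} (h : WeakConvTo x x₀) (hx : ∀ n, x n ∈ s) : x₀ ∈ s := by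
  by_contra hx₀
  obtain ⟨f, u, hfs, hu⟩ := geometric_hahn_banach_closed_point hs hs' hx₀
  have : f x₀ ≤ u := le_of_tendsto' (h f) fun n => (hfs _ (hx n)).le
  linarith

theorem WeaklyCompactOp.comp {G : Type*} [NormedAddCommGroup G] [NormedSpace ℝ G]
    {T : E →L[ℝ] F} (hT : WeaklyCompactOp T) (U : F →L[ℝ] G) : WeaklyCompactOp (U.comp T) := by
  intro x hx
  obtain ⟨φ, hφ, y, hy⟩ := hT x hx
  exact ⟨φ, hφ, U y, hy.map U⟩

theorem SeqReflexive.weaklyCompactOp (hF : SeqReflexive F) (T : E →L[ℝ] F) :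
    WeaklyCompactOp T := by
  rintro x ⟨C, hC⟩
  exact hF _ ⟨‖T‖ * C, fun n => T.le_of_opNorm_le_of_le le_rfl (hC n)⟩

theorem exists_lp_top_norm_map_eq (v : ℕ → F) :
    ∃ A : F →L[ℝ] lp (fun _ : ℕ => ℝ) ∞, ∀ k, ‖A (v k)‖ = ‖v k‖ := by
  choose g hg_norm hg_v using fun k => exists_dual_vector'' ℝ (v k)
  have hg : ∀ k y, ‖g k y‖ ≤ ‖y‖ := fun k y =>
    ((g k).le_of_opNorm_le (hg_norm k) y).trans_eq (one_mul _)
  let A : F →ₗ[ℝ] lp (fun _ : ℕ => ℝ) ∞ :=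
    { toFun := fun y => ⟨fun k => g k y, memℓp_infty ⟨‖y‖, by rintro _ ⟨k, rfl⟩; exact hg k y⟩⟩
      map_add' := fun y z => by ext k; exact map_add (g k) y z
      map_smul' := fun c y => by ext k; exact map_smul (g k) c y }
  have hA : ∀ y, ‖A y‖ ≤ ‖y‖ := fun y => lp.norm_le_of_forall_le (norm_nonneg y) fun k => hg k y
  refine ⟨A.mkContinuous 1 fun y => by simpa using hA y, fun k => le_antisymm (hA _) ?_⟩
  calc ‖v k‖ = ‖g k (v k)‖ := by simp [hg_v k]
    _ ≤ ‖A (v k)‖ := lp.norm_apply_le_norm ENNReal.top_ne_zero (A (v k)) k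

variable {S : E →L[ℝ] F} {K : ℝ≥0}

theorem exists_comp_eq_of_antilipschitz (hS : AntilipschitzWith K S) (f : E →L[ℝ] ℝ) :
    ∃ g : F →L[ℝ] ℝ, ∀ z, g (S z) = f z := by
  let e₀ := LinearEquiv.ofInjective S.toLinearMap hS.injective
  let e := e₀.toContinuousLinearEquivOfBounds ‖S‖ K (fun z => S.le_opNorm z) fun v => by
    have := S.bound_of_antilipschitz hS (e₀.symm v)
    rwa [← S.coe_coe, LinearEquiv.ofInjective_symm_apply] at this
  obtain ⟨g, hg, -⟩ := exists_extension_norm_eq _ (f.comp e.symm.toContinuousLinearMap)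
  exact ⟨g, fun z => (hg (e z)).trans (by simp)⟩

variable [CompleteSpace E]

theorem WeakConvTo.exists_of_map_of_antilipschitz (hS : AntilipschitzWith K S) {x : ℕ → E}
    {y : F} (h : WeakConvTo (fun n => S (x n)) y) : ∃ x₀, WeakConvTo x x₀ := by
  have hconv : Convex ℝ (Set.range S) := by
    simpa using (convex_univ (𝕜 := ℝ) (E := E)).linear_image S.toLinearMap
  obtain ⟨x₀, rfl⟩ := h.mem_of_convex_of_isClosed hconv (hS.isClosed_range S.uniformContinuous)
    fun n => ⟨x n, rfl⟩
  refine ⟨x₀, fun f => ?_⟩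
  obtain ⟨g, hg⟩ := exists_comp_eq_of_antilipschitz hS f
  simpa only [hg] using h g

theorem SeqReflexive.of_antilipschitz (hF : SeqReflexive F) (hS : AntilipschitzWith K S) :
    SeqReflexive E := by
  intro x hx
  obtain ⟨φ, hφ, _, hy⟩ := hF.weaklyCompactOp S x hx
  exact ⟨φ, hφ, WeakConvTo.exists_of_map_of_antilipschitz hS hy⟩

end

/-- `DunfordPettisProp.{u, v}` only quantifies over targets in `Type v`, so `T` is followed by an
operator into `ℓ∞` (lifted to `Type v`) that is isometric on the differences `T (x m) - T (x n)`. -/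
theorem DunfordPettisProp.completelyContinuousOp {E : Type u} [NormedAddCommGroup E]
    [NormedSpace ℝ E] (hE : DunfordPettisProp.{u, v} E) {Z : Type w} [NormedAddCommGroup Z]
    [NormedSpace ℝ Z] [CompleteSpace Z] {T : E →L[ℝ] Z} (hT : WeaklyCompactOp T) :
    CompletelyContinuousOp T := by
  intro x x₀ hx
  obtain ⟨A, hA⟩ := exists_lp_top_norm_map_eq fun k => T (x k.unpair.1) - T (x k.unpair.2)
  let J : lp (fun _ : ℕ => ℝ) ∞ ≃L[ℝ] ULift.{v} (lp (fun _ : ℕ => ℝ) ∞) :=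
    ContinuousLinearEquiv.ulift.symm
  obtain ⟨ℓ, hℓ⟩ := hE _ ((J.toContinuousLinearMap.comp A).comp T) (hT.comp _) x x₀ hx
  have hAT : CauchySeq fun n => A (T (x n)) :=
    ((J.symm.continuous.tendsto ℓ).comp hℓ).cauchySeq
  refine cauchySeq_tendsto_of_complete (Metric.cauchySeq_iff.2 fun ε hε => ?_)
  obtain ⟨N, hN⟩ := Metric.cauchySeq_iff.1 hAT ε hε
  refine ⟨N, fun m hm n hn => ?_⟩
  have hmn := hA (Nat.pair m n)
  simp only [Nat.unpair_pair, map_sub] at hmn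
  simpa only [dist_eq_norm, ← hmn] using hN m hm n hn

theorem not_dunfordPettisProp_of_seqReflexive {E : Type u} [NormedAddCommGroup E]
    [NormedSpace ℝ E] [CompleteSpace E] (hinf : ¬FiniteDimensional ℝ E) (hE : SeqReflexive E) :
    ¬DunfordPettisProp.{u, v} E := by
  intro hDP
  obtain ⟨R, x, -, hxR, hsep⟩ := exists_seq_norm_le_one_le_norm_sub hinf
  obtain ⟨φ, hφ, x₀, hx₀⟩ := hE x ⟨R, hxR⟩
  obtain ⟨y, hy⟩ :=
    hDP.completelyContinuousOp (hE.weaklyCompactOp (ContinuousLinearMap.id ℝ E)) _ x₀ hx₀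
  obtain ⟨N, hN⟩ := Metric.cauchySeq_iff'.1 hy.cauchySeq 1 one_pos
  have hnear := hN (N + 1) N.le_succ
  have hfar := hsep (hφ.injective.ne N.succ_ne_self)
  simp only [ContinuousLinearMap.id_apply, Function.comp_apply, dist_eq_norm] at hnear
  linarith

variable {X : Type*} [NormedAddCommGroup X] [NormedSpace ℝ X] [CompleteSpace X]
variable {Y : Type*} [NormedAddCommGroup Y] [NormedSpace ℝ Y] [CompleteSpace Y]

/-- If every infinite-dimensional closed subspace of `X` has the Dunford–Pettis property and
`Y` is reflexive, then every bounded linear operator `T : X → Y` is strictly singular. -/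
theorem stmt10
    (hX : ∀ X₀ : Subspace ℝ X, IsClosed (X₀ : Set X) → ¬FiniteDimensional ℝ X₀ →
      DunfordPettisProp X₀)
    (hY : SeqReflexive Y) (T : X →L[ℝ] Y) : StrictlySingular T := by
  rintro X₀ hX₀ hinf ⟨c, hc, hbound⟩
  have : CompleteSpace X₀ := hX₀.completeSpace_coe
  have hS : AntilipschitzWith ⟨c⁻¹, inv_nonneg.2 hc.le⟩ (T.comp X₀.subtypeL) :=
    ContinuousLinearMap.antilipschitz_of_bound _ fun z => (le_inv_mul_iff₀ hc).2 (hbound z z.2)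
  exact not_dunfordPettisProp_of_seqReflexive hinf (hY.of_antilipschitz hS) (hX X₀ hX₀ hinf)
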